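/- Let v : ℝ → ℝ be 2π-periodic and twice continuously differentiable. If v(x) − v''(x) > 0 for every x ∈ ℝ, then −v(x) ≤ v'(x) ≤ v(x) for every x ∈ ℝ. If instead v(x) − v''(x) < 0 for every x ∈ ℝ, then v(x) ≤ v'(x) ≤ −v(x) for every x ∈ ℝ. -/

import Mathlib

open Real Function

theorem Function.Periodic.deriv {𝕜 F : Type*} [NontriviallyNormedField 𝕜]
    [NormedAddCommGroup F] [NormedSpace 𝕜 F] {f : 𝕜 → F} {c : 𝕜} (hf : Periodic f c) : Periodic (deriv f) c :=
  fun x => by rw [← deriv_comp_add_const, hf.funext]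

theorem iteratedDeriv_two_eq_deriv_deriv {𝕜 F : Type*} [NontriviallyNormedField 𝕜]
    [NormedAddCommGroup F] [NormedSpace 𝕜 F] (f : 𝕜 → F) :
    iteratedDeriv 2 f = deriv (deriv f) := by
  rw [iteratedDeriv_succ', iteratedDeriv_one]

section PeriodicNonneg

variable {f : ℝ → ℝ} {T : ℝ}

/-- `exp (-x) * f x` is antitone, yet one period multiplies it by `exp (-T) < 1`. -/
theorem nonneg_of_periodic_of_deriv_le_self (hf : Periodic f T) (hT : 0 < T)
    (hd : Differentiable ℝ f) (h : ∀ x, deriv f x ≤ f x) (x : ℝ) : 0 ≤ f x := by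
  set g : ℝ → ℝ := fun y => exp (-y) * f y
  have hg_deriv (y : ℝ) : HasDerivAt g (exp (-y) * (deriv f y - f y)) y :=
    ((hasDerivAt_neg y).exp.fun_mul (hd y).hasDerivAt).congr_deriv (by ring)
  have hg_anti : Antitone g := by
    refine antitone_of_deriv_nonpos (fun y => (hg_deriv y).differentiableAt) fun y => ?_
    rw [(hg_deriv y).deriv]
    exact mul_nonpos_of_nonneg_of_nonpos (exp_pos _).le (sub_nonpos.mpr (h y))
  have hg_period : g (x + T) = exp (-T) * g x := by
    simp only [g, hf x, neg_add, exp_add]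
    ring
  have hg_le : g (x + T) ≤ g x := hg_anti (le_add_of_nonneg_right hT.le)
  have hexp : exp (-T) < 1 := exp_lt_one_iff.mpr (neg_lt_zero.mpr hT)
  have hgx : 0 ≤ g x := by nlinarith
  exact nonneg_of_mul_nonneg_right hgx (exp_pos _)

theorem nonneg_of_periodic_of_neg_self_le_deriv (hf : Periodic f T) (hT : 0 < T)
    (hd : Differentiable ℝ f) (h : ∀ x, -f x ≤ deriv f x) (x : ℝ) : 0 ≤ f x := by
  have hf_neg : Periodic (fun y => f (-y)) T := fun y => by
    simp only [neg_add, ← sub_eq_add_neg, hf.sub_eq]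
  simpa using nonneg_of_periodic_of_deriv_le_self hf_neg hT (hd.comp differentiable_neg)
    (fun y => by rw [deriv_comp_neg]; linarith [h (-y)]) (-x)

end PeriodicNonneg

/-- With `V = v - v''`, `(v + v')' = (v + v') - V` and `(v - v')' = -(v - v') + V`. -/
theorem abs_deriv_le_of_periodic_of_iteratedDeriv_two_le {v : ℝ → ℝ} {T : ℝ}
    (hv : ContDiff ℝ 2 v) (hper : Periodic v T) (hT : 0 < T)
    (hV : ∀ x, iteratedDeriv 2 v x ≤ v x) (x : ℝ) : |deriv v x| ≤ v x := by
  have hd : Differentiable ℝ v := hv.differentiable (by norm_num)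
  have hd' : Differentiable ℝ (deriv v) := hv.differentiable_deriv_two
  rw [iteratedDeriv_two_eq_deriv_deriv] at hV
  have h_add : 0 ≤ v x + deriv v x :=
    nonneg_of_periodic_of_deriv_le_self (hper.add hper.deriv) hT (hd.add hd') (fun y => by
      rw [deriv_add (hd y) (hd' y), Pi.add_apply]; linarith [hV y]) x
  have h_sub : 0 ≤ v x - deriv v x :=
    nonneg_of_periodic_of_neg_self_le_deriv (hper.sub hper.deriv) hT (hd.sub hd') (fun y => by
      rw [deriv_sub (hd y) (hd' y), Pi.sub_apply]; linarith [hV y]) x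
  exact abs_le.mpr ⟨by linarith, by linarith⟩

/-- The pointwise comparison (6.8): a one-signed momentum V = v − v_xx forces
|v_x| ≤ |v| (with matching sign pattern), for a C² 2π-periodic function v. -/
theorem sign_definite_momentum_comparison (v : ℝ → ℝ) (hv : ContDiff ℝ 2 v)
    (hper : ∀ x, v (x + 2 * π) = v x) :
    ((∀ x : ℝ, 0 < v x - iteratedDeriv 2 v x) →
      ∀ x : ℝ, -v x ≤ deriv v x ∧ deriv v x ≤ v x) ∧
    ((∀ x : ℝ, v x - iteratedDeriv 2 v x < 0) →
      ∀ x : ℝ, v x ≤ deriv v x ∧ deriv v x ≤ -v x) := by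
  constructor
  · intro hV x
    exact abs_le.mp <| abs_deriv_le_of_periodic_of_iteratedDeriv_two_le hv hper two_pi_pos
      (fun y => by linarith [hV y]) x
  · intro hV x
    have hneg := abs_deriv_le_of_periodic_of_iteratedDeriv_two_le hv.neg
      (fun y => congrArg Neg.neg (hper y) : Periodic (-v) (2 * π)) two_pi_pos
      (fun y => by rw [iteratedDeriv_fun_neg]; linarith [hV y]) x
    rw [deriv.fun_neg, abs_neg] at hneg
    simpa using abs_le.mp hneg
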